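/- Fix a real α with 0 < α ≤ 1 and t > 0. Then the function (λ₁, …, λₙ) ↦ Σ_{i=1}^n u(λᵢ t), where u(s) = s^α / (e^{s^α} − 1), is Schur-convex on (0, ∞)ⁿ: if (λ₁,…,λₙ) is majorized by (θ₁,…,θₙ), then Σ_{i=1}^n u(λᵢ t) ≤ Σ_{i=1}^n u(θᵢ t). Equivalently, for each fixed t > 0 the reverse hazard rate r_{n:n}^λ(t) = (α/t)·Σ_{i=1}^n u(λᵢ t) of a parallel system of independent Weibull components W(α, λ₁), …, W(α, λₙ) is a Schur-convex function of the scale parameters. -/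

import Mathlib

/-
Karamata's inequality turns Schur-convexity of `λ ↦ ∑ g (λᵢ)` into convexity of `g`, here
`g l = φ ((l t) ^ α)` with `φ s = s / (e^s - 1)`. On `(0, ∞)` the function `φ` is decreasing and
convex, since `φ'' s = e^s ((s - 2) e^s + s + 2) / (e^s - 1)^3` and the middle factor vanishes at
`0` with derivative `(s - 1) e^s + 1 ≥ 0`; as `l ↦ (l t) ^ α` is concave for `α ≤ 1`, `g` is convex.
Karamata's inequality itself follows by summing the supporting lines of `g` at the sorted `λᵢ`
and applying Abel summation to the partial-sum inequalities of the majorization.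
-/

open Real Set

/-- `x` is weakly majorized (from below) by `y`: for every `j`, the sum of the `j`
smallest components of `x` is at least the sum of the `j` smallest components of `y`.
Equivalently: for every subset `s` of indices there is a subset `u` of the same
cardinality with `∑_{i ∈ u} y i ≤ ∑_{i ∈ s} x i`. -/
def WeaklyMajorizedBy {n : ℕ} (x y : Fin n → ℝ) : Prop :=
  ∀ s : Finset (Fin n), ∃ u : Finset (Fin n),
    u.card = s.card ∧ ∑ i ∈ u, y i ≤ ∑ i ∈ s, x i

/-- `x` is majorized by `y`: the partial sums of the `j` smallest components of `x`
dominate those of `y`, and the total sums agree. -/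
def MajorizedBy {n : ℕ} (x y : Fin n → ℝ) : Prop :=
  WeaklyMajorizedBy x y ∧ ∑ i, x i = ∑ i, y i

lemma one_sub_mul_exp_le_one (s : ℝ) : (1 - s) * exp s ≤ 1 := by
  calc (1 - s) * exp s ≤ exp (-s) * exp s := by gcongr; exact one_sub_le_exp_neg s
    _ = 1 := by rw [← exp_add, neg_add_cancel, exp_zero]

lemma sub_two_mul_exp_add_add_two_nonneg {s : ℝ} (hs : 0 ≤ s) :
    0 ≤ (s - 2) * exp s + (s + 2) := by
  have hq : MonotoneOn (fun z => (z - 2) * exp z + (z + 2)) (Ici 0) := by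
    refine monotoneOn_of_hasDerivWithinAt_nonneg (f' := fun z => (z - 1) * exp z + 1)
      (convex_Ici 0) (by fun_prop) (fun z _ => ?_) (fun z _ => ?_)
    · exact ((((hasDerivAt_id z).sub_const 2).mul (hasDerivAt_exp z)).add
        ((hasDerivAt_id z).add_const 2)).hasDerivWithinAt.congr_deriv (by simp only [id]; ring)
    · linarith [one_sub_mul_exp_le_one z]
  simpa using hq self_mem_Ici hs hs

lemma exp_sub_one_ne_zero {s : ℝ} (hs : s ≠ 0) : exp s - 1 ≠ 0 :=
  sub_ne_zero.2 (mt (exp_eq_one_iff s).1 hs)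

lemma hasDerivAt_div_exp_sub_one {s : ℝ} (hs : s ≠ 0) :
    HasDerivAt (fun z => z / (exp z - 1)) ((exp s - 1 - s * exp s) / (exp s - 1) ^ 2) s :=
  ((hasDerivAt_id s).div ((hasDerivAt_exp s).sub_const 1) (exp_sub_one_ne_zero hs)).congr_deriv
    (by simp only [id, one_mul])

lemma hasDerivAt_exp_sub_one_sub_mul_exp_div_sq {s : ℝ} (hs : s ≠ 0) :
    HasDerivAt (fun z => (exp z - 1 - z * exp z) / (exp z - 1) ^ 2)
      (exp s * ((s - 2) * exp s + (s + 2)) / (exp s - 1) ^ 3) s := by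
  have h := exp_sub_one_ne_zero hs
  refine ((((hasDerivAt_exp s).sub_const 1).sub ((hasDerivAt_id s).mul (hasDerivAt_exp s))).div
    (((hasDerivAt_exp s).sub_const 1).pow 2) (pow_ne_zero 2 h)).congr_deriv ?_
  simp only [Pi.pow_apply, Pi.sub_apply, Pi.mul_apply, id]
  field_simp
  ring

lemma convexOn_div_exp_sub_one : ConvexOn ℝ (Ioi 0) (fun s => s / (exp s - 1)) := by
  have hne (s : ℝ) (hs : s ∈ interior (Ioi 0)) : s ≠ 0 := ne_of_gt (interior_subset hs)
  refine convexOn_of_hasDerivWithinAt2_nonneg (convex_Ioi 0)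
    (fun s hs => (hasDerivAt_div_exp_sub_one (ne_of_gt hs)).continuousAt.continuousWithinAt)
    (fun s hs => (hasDerivAt_div_exp_sub_one (hne s hs)).hasDerivWithinAt)
    (fun s hs => (hasDerivAt_exp_sub_one_sub_mul_exp_div_sq (hne s hs)).hasDerivWithinAt)
    (fun s hs => ?_)
  rw [interior_Ioi] at hs
  have := sub_pos.2 (one_lt_exp_iff.2 hs)
  have := sub_two_mul_exp_add_add_two_nonneg hs.le
  positivity

lemma antitoneOn_div_exp_sub_one : AntitoneOn (fun s => s / (exp s - 1)) (Ioi 0) := by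
  refine antitoneOn_of_hasDerivWithinAt_nonpos (convex_Ioi 0)
    (fun s hs => (hasDerivAt_div_exp_sub_one (ne_of_gt hs)).continuousAt.continuousWithinAt)
    (fun s hs => (hasDerivAt_div_exp_sub_one (ne_of_gt (interior_subset hs))).hasDerivWithinAt)
    (fun s _ => div_nonpos_of_nonpos_of_nonneg ?_ (sq_nonneg _))
  linarith [one_sub_mul_exp_le_one s]

theorem convexOn_mul_rpow_div_exp_sub_one {α t : ℝ} (hα : 0 ≤ α) (hα1 : α ≤ 1) (ht : 0 < t) :
    ConvexOn ℝ (Ioi 0) (fun l => (l * t) ^ α / (exp ((l * t) ^ α) - 1)) := by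
  set h : ℝ → ℝ := fun l => (l * t) ^ α
  have hconc : ConcaveOn ℝ (Ioi 0) h :=
    (((concaveOn_rpow hα hα1).subset Ioi_subset_Ici_self (convex_Ioi 0)).smul
      (rpow_nonneg ht.le α)).congr fun l (hl : 0 < l) => by
        simp only [h, smul_eq_mul]
        rw [mul_rpow hl.le ht.le, mul_comm]
  have himage : h '' Ioi 0 ⊆ Ioi 0 := by
    rintro _ ⟨l, hl, rfl⟩
    exact rpow_pos_of_pos (mul_pos hl ht) α
  have hconvex : Convex ℝ (h '' Ioi 0) :=
    (isPreconnected_Ioi.image h fun l hl =>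
      ((continuousAt_id.mul continuousAt_const).rpow_const
        (Or.inl (mul_pos hl ht).ne')).continuousWithinAt).convex
  exact (convexOn_div_exp_sub_one.subset himage hconvex).comp_concaveOn hconc
    (antitoneOn_div_exp_sub_one.mono himage)

lemma Finset.sum_le_sum_of_card_eq_of_forall_le {ι M : Type*} [AddCommMonoid M] [LinearOrder M]
    [IsOrderedAddMonoid M] {f : ι → M} {s t : Finset ι} (hst : s.card = t.card)
    (h : ∀ i ∈ s, ∀ j ∈ t, f i ≤ f j) : ∑ i ∈ s, f i ≤ ∑ j ∈ t, f j := by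
  rcases s.eq_empty_or_nonempty with rfl | hs
  · rw [card_empty, eq_comm, card_eq_zero] at hst
    simp [hst]
  obtain ⟨i, hi, hmax⟩ := s.exists_max_image f hs
  calc ∑ i ∈ s, f i ≤ s.card • f i := sum_le_card_nsmul s f (f i) hmax
    _ = t.card • f i := by rw [hst]
    _ ≤ ∑ j ∈ t, f j := card_nsmul_le_sum t f (f i) (h i hi)

lemma Finset.sum_le_sum_of_card_eq_of_forall_mem_notMem_le {ι M : Type*} [DecidableEq ι]
    [AddCommMonoid M] [LinearOrder M] [IsOrderedAddMonoid M] {f : ι → M} {s t : Finset ι}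
    (hst : s.card = t.card) (h : ∀ i ∈ s, ∀ j ∉ s, f i ≤ f j) : ∑ i ∈ s, f i ≤ ∑ j ∈ t, f j := by
  rw [← sum_inter_add_sum_sdiff s t, ← sum_inter_add_sum_sdiff t s, inter_comm]
  gcongr 1
  exact sum_le_sum_of_card_eq_of_forall_le (card_sdiff_comm hst)
    fun i hi j hj => h i (mem_sdiff.1 hi).1 j (mem_sdiff.1 hj).2

/-- Entries from index `n` on are junk (`0`). -/
noncomputable def sortedSeq {n : ℕ} (x : Fin n → ℝ) (k : ℕ) : ℝ :=
  if h : k < n then x (Tuple.sort x ⟨k, h⟩) else 0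

noncomputable def sortedPrefix {n : ℕ} (x : Fin n → ℝ) (k : ℕ) : Finset (Fin n) :=
  Finset.univ.filter fun i => ((Tuple.sort x).symm i : ℕ) < k

section Sorted

variable {n : ℕ} (x : Fin n → ℝ)

lemma sortedSeq_of_lt {k : ℕ} (hk : k < n) : sortedSeq x k = x (Tuple.sort x ⟨k, hk⟩) :=
  dif_pos hk

lemma sortedSeq_mem {S : Set ℝ} (hx : ∀ i, x i ∈ S) {k : ℕ} (hk : k < n) : sortedSeq x k ∈ S := by
  rw [sortedSeq_of_lt x hk]
  exact hx _

lemma monotoneOn_sortedSeq : MonotoneOn (sortedSeq x) (Iio n) := fun i hi j hj hij => by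
  rw [sortedSeq_of_lt x hi, sortedSeq_of_lt x hj]
  exact Tuple.monotone_sort x (Fin.mk_le_mk.2 hij)

lemma sum_range_sortedSeq (F : ℝ → ℝ) :
    ∑ k ∈ Finset.range n, F (sortedSeq x k) = ∑ i, F (x i) := by
  rw [← Fin.sum_univ_eq_sum_range (fun k => F (sortedSeq x k)),
    ← Equiv.sum_comp (Tuple.sort x) (fun i => F (x i))]
  exact Finset.sum_congr rfl fun i _ => by rw [sortedSeq_of_lt x i.isLt]

lemma injOn_sortedPrefix (k : ℕ) :
    Set.InjOn (fun i => ((Tuple.sort x).symm i : ℕ)) (sortedPrefix x k) :=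
  fun _ _ _ _ h => (Tuple.sort x).symm.injective (Fin.val_injective h)

lemma surjOn_sortedPrefix {k : ℕ} (hk : k ≤ n) :
    Set.SurjOn (fun i => ((Tuple.sort x).symm i : ℕ)) (sortedPrefix x k) (Finset.range k) :=
  fun m hm => ⟨Tuple.sort x ⟨m, (Finset.mem_range.1 hm).trans_le hk⟩,
    by simpa [sortedPrefix] using hm, by simp⟩

lemma card_sortedPrefix {k : ℕ} (hk : k ≤ n) : (sortedPrefix x k).card = k := by
  rw [Finset.card_nbij _ (fun i hi => by simpa [sortedPrefix] using hi) (injOn_sortedPrefix x k)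
    (surjOn_sortedPrefix x hk), Finset.card_range]

lemma sum_sortedPrefix {k : ℕ} (hk : k ≤ n) :
    ∑ i ∈ sortedPrefix x k, x i = ∑ m ∈ Finset.range k, sortedSeq x m :=
  Finset.sum_nbij _ (fun i hi => by simpa [sortedPrefix] using hi) (injOn_sortedPrefix x k)
    (surjOn_sortedPrefix x hk) fun i _ => by simp [sortedSeq_of_lt x ((Tuple.sort x).symm i).isLt]

lemma sum_sortedPrefix_le {k : ℕ} {u : Finset (Fin n)} (hu : u.card = (sortedPrefix x k).card) :
    ∑ i ∈ sortedPrefix x k, x i ≤ ∑ i ∈ u, x i := by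
  refine Finset.sum_le_sum_of_card_eq_of_forall_mem_notMem_le hu.symm fun i hi j hj => ?_
  simp only [sortedPrefix, Finset.mem_filter, Finset.mem_univ, true_and, not_lt] at hi hj
  simpa using Tuple.monotone_sort x (show (Tuple.sort x).symm i ≤ (Tuple.sort x).symm j by
    rw [Fin.le_def]; omega)

end Sorted

lemma WeaklyMajorizedBy.sum_range_sortedSeq_le {n : ℕ} {x y : Fin n → ℝ}
    (h : WeaklyMajorizedBy x y) {k : ℕ} (hk : k ≤ n) :
    ∑ m ∈ Finset.range k, sortedSeq y m ≤ ∑ m ∈ Finset.range k, sortedSeq x m := by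
  obtain ⟨u, hu, hle⟩ := h (sortedPrefix x k)
  rw [← sum_sortedPrefix y hk, ← sum_sortedPrefix x hk]
  exact (sum_sortedPrefix_le y (by rw [hu, card_sortedPrefix x hk, card_sortedPrefix y hk])).trans
    hle

lemma ConvexOn.add_rightDeriv_mul_sub_le {S : Set ℝ} {f : ℝ → ℝ} (hf : ConvexOn ℝ S f) {x y : ℝ}
    (hx : x ∈ interior S) (hy : y ∈ S) : f x + derivWithin f (Ioi x) x * (y - x) ≤ f y := by
  rcases lt_trichotomy x y with hxy | rfl | hxy
  · have := hf.rightDeriv_le_slope_of_mem_interior hx hy hxy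
    rw [slope_def_field, le_div_iff₀ (sub_pos.2 hxy)] at this
    linarith
  · simp
  · have := (hf.slope_le_leftDeriv_of_mem_interior hy hx hxy).trans
      (hf.leftDeriv_le_rightDeriv_of_mem_interior hx)
    rw [slope_def_field, div_le_iff₀ (sub_pos.2 hxy)] at this
    linarith

lemma sum_range_mul_nonpos_of_monotoneOn {c d : ℕ → ℝ} {n : ℕ} (hc : MonotoneOn c (Iio n))
    (hd : ∀ k ≤ n, 0 ≤ ∑ i ∈ Finset.range k, d i) (hdn : ∑ i ∈ Finset.range n, d i = 0) :
    ∑ i ∈ Finset.range n, c i * d i ≤ 0 := by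
  have h := Finset.sum_range_by_parts c d n
  simp only [smul_eq_mul] at h
  rw [h, hdn, mul_zero, zero_sub, neg_nonpos]
  refine Finset.sum_nonneg fun i hi => ?_
  have hi : i + 1 < n := by have := Finset.mem_range.1 hi; omega
  exact mul_nonneg (sub_nonneg.2 (hc (show i < n by omega) hi (Nat.le_succ i))) (hd _ hi.le)

theorem ConvexOn.sum_range_le_sum_range_of_monotoneOn {S : Set ℝ} {f : ℝ → ℝ}
    (hf : ConvexOn ℝ S f) {x y : ℕ → ℝ} {n : ℕ} (hx : ∀ i < n, x i ∈ interior S)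
    (hy : ∀ i < n, y i ∈ S) (hmono : MonotoneOn x (Iio n))
    (hpre : ∀ k ≤ n, ∑ i ∈ Finset.range k, y i ≤ ∑ i ∈ Finset.range k, x i)
    (htot : ∑ i ∈ Finset.range n, x i = ∑ i ∈ Finset.range n, y i) :
    ∑ i ∈ Finset.range n, f (x i) ≤ ∑ i ∈ Finset.range n, f (y i) := by
  set c : ℕ → ℝ := fun i => derivWithin f (Ioi (x i)) (x i)
  have hc : MonotoneOn c (Iio n) := fun i hi j hj hij =>
    hf.monotoneOn_rightDeriv (hx i hi) (hx j hj) (hmono hi hj hij)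
  have habel : ∑ i ∈ Finset.range n, c i * (x i - y i) ≤ 0 :=
    sum_range_mul_nonpos_of_monotoneOn hc
      (fun k hk => by rw [Finset.sum_sub_distrib]; linarith [hpre k hk])
      (by rw [Finset.sum_sub_distrib, htot, sub_self])
  calc ∑ i ∈ Finset.range n, f (x i)
      ≤ ∑ i ∈ Finset.range n, f (x i) - ∑ i ∈ Finset.range n, c i * (x i - y i) := by linarith
    _ = ∑ i ∈ Finset.range n, (f (x i) + c i * (y i - x i)) := by
      rw [← Finset.sum_sub_distrib]; exact Finset.sum_congr rfl fun i _ => by ring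
    _ ≤ ∑ i ∈ Finset.range n, f (y i) := Finset.sum_le_sum fun i hi =>
      hf.add_rightDeriv_mul_sub_le (hx i (Finset.mem_range.1 hi)) (hy i (Finset.mem_range.1 hi))

theorem ConvexOn.sum_le_sum_of_majorizedBy {S : Set ℝ} {f : ℝ → ℝ} (hf : ConvexOn ℝ S f)
    {n : ℕ} {x y : Fin n → ℝ} (hx : ∀ i, x i ∈ interior S) (hy : ∀ i, y i ∈ S)
    (h : MajorizedBy x y) : ∑ i, f (x i) ≤ ∑ i, f (y i) := by
  rw [← sum_range_sortedSeq x f, ← sum_range_sortedSeq y f]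
  refine hf.sum_range_le_sum_range_of_monotoneOn (fun k hk => sortedSeq_mem x hx hk)
    (fun k hk => sortedSeq_mem y hy hk) (monotoneOn_sortedSeq x)
    (fun k hk => h.1.sum_range_sortedSeq_le hk) ?_
  convert h.2 using 1 <;> exact sum_range_sortedSeq _ id

/-- For `0 < α ≤ 1` and fixed `t > 0`, the map `(λ₁,…,λₙ) ↦ ∑ u(λᵢ t)` with
`u(s) = s^α / (e^{s^α} − 1)` is Schur-convex on `(0,∞)ⁿ`: if `λ` is majorized by `θ`
then `∑ u(λᵢ t) ≤ ∑ u(θᵢ t)`. -/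
theorem weibull_rhr_schur_convex
    {n : ℕ} (α : ℝ) (hα : 0 < α) (hα1 : α ≤ 1) (t : ℝ) (ht : 0 < t)
    (lam θ : Fin n → ℝ) (hlam : ∀ i, 0 < lam i) (hθ : ∀ i, 0 < θ i)
    (hmaj : MajorizedBy lam θ) :
    ∑ i, (lam i * t) ^ α / (exp ((lam i * t) ^ α) - 1) ≤
      ∑ i, (θ i * t) ^ α / (exp ((θ i * t) ^ α) - 1) :=
  (convexOn_mul_rpow_div_exp_sub_one hα.le hα1 ht).sum_le_sum_of_majorizedBy
    (fun i => by rw [interior_Ioi]; exact hlam i) hθ hmaj
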